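/- If γ_1 = 1 and γ_3 < ∞, then Q_n = (2Q_0/γ_2) n + O(log n) as n → ∞; that is, there exist a constant C > 0 and an index N such that |Q_n − (2Q_0/γ_2) n| ≤ C log n for all n ≥ N. -/

import Mathlib

/-!
Let `r, ρ, π` be the first, second and third iterated tail sums of `f` (`r k = ∑_{j>k} f j`,
`ρ k = ∑_{j>k} r j`, `π k = ∑_{j>k} ρ j`), so that `∑ r = γ₁`, `∑ ρ = γ₂/2 =: μ`, `∑ π = γ₃/6`.
In formal power series, with `F, R, P, Π` the series of `f, r, ρ, π`,
`(1 - X) R = 1 - F`, `(1 - X) P = 1 - R` (this is `γ₁ = 1`) and `(1 - X) Π = μ - P`,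
while the recurrence says `X Q = F (Q - Q₀)`. Hence `Q (F - X) = Q₀ F` with `F - X = (1 - X)² P`,
which rearranges to
  `μ Q = Q₀ ∑ n Xⁿ + Q₀ P + Π V`,  where `V = (1 - X) Q`.
The increments `V` satisfy `(1 - R) V = Q₀ F` and `(1 - X) P V = Q₀ F`, whence
`0 ≤ V n ≤ Q₀ / f₀`. As `γ₃ < ∞`, reading off coefficients gives
`0 ≤ μ Q n - Q₀ n ≤ Q₀ + Q₀ γ₃ / (6 f₀)`: the remainder is even bounded.
-/

open Finset hiding mk
open PowerSeries
open scoped ENNReal Nat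

namespace Postnikov

section OneSubX

variable {R : Type*} [CommRing R]

lemma coeff_one_sub_X_mul_zero (A : R⟦X⟧) : coeff 0 ((1 - X) * A) = coeff 0 A := by
  simp [sub_mul]

lemma coeff_one_sub_X_mul_succ (A : R⟦X⟧) (n : ℕ) :
    coeff (n + 1) ((1 - X) * A) = coeff (n + 1) A - coeff n A := by
  simp [sub_mul, coeff_succ_X_mul]

lemma coeff_eq_sum_range_of_one_sub_X_mul_eq {A B : R⟦X⟧} (h : (1 - X) * A = B) (n : ℕ) :
    coeff n A = ∑ i ∈ range (n + 1), coeff i B := by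
  induction n with
  | zero => simp [← h, coeff_one_sub_X_mul_zero]
  | succ n ih => rw [sum_range_succ, ← ih, ← h, coeff_one_sub_X_mul_succ]; ring

lemma sum_range_add_eq_of_one_sub_X_mul_mk_eq {a t : ℕ → R} {c : R}
    (h : (1 - X) * mk t = C c - mk a) (n : ℕ) : ∑ i ∈ range (n + 1), a i + t n = c := by
  rw [← coeff_mk n t, coeff_eq_sum_range_of_one_sub_X_mul_eq h]
  simp [sum_range_succ', coeff_C]

lemma one_sub_X_sq_mul_mk_natCast : (1 - X) ^ 2 * mk (fun n => (n : R)) = X := by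
  have h : (1 - X) * mk (fun n => (n : R)) = X * mk 1 := by
    ext (_ | n)
    · simp [coeff_one_sub_X_mul_zero]
    · simp [coeff_one_sub_X_mul_succ, coeff_succ_X_mul]
  rw [sq, mul_assoc, h, mul_left_comm, mul_comm (1 - X), mk_one_mul_one_sub_eq_one, mul_one]

lemma one_sub_X_ne_zero [Nontrivial R] : (1 - X : R⟦X⟧) ≠ 0 := fun h => by
  simpa using congrArg (coeff 0) h

lemma X_mul_mk_eq_mk_mul_sub {f Q : ℕ → R}
    (hrec : ∀ n, Q n = ∑ i ∈ range (n + 1), f i * Q (n - i + 1)) :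
    X * mk Q = mk f * (mk Q - C (Q 0)) := by
  ext (_ | n)
  · simp
  · rw [coeff_succ_X_mul, coeff_mul, Nat.sum_antidiagonal_eq_sum_range_succ
      (fun i j => coeff i (mk f) * coeff j (mk Q - C (Q 0))), sum_range_succ, coeff_mk, hrec n]
    simp only [map_sub, coeff_mk, coeff_C, Nat.sub_self, if_true, sub_self, mul_zero, add_zero]
    refine sum_congr rfl fun i hi => ?_
    rw [mem_range] at hi
    rw [if_neg (by omega), sub_zero, Nat.sub_add_comm (by omega)]

end OneSubX

section Ordered

variable {R : Type*} [CommRing R] [LinearOrder R] [IsStrictOrderedRing R]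

lemma coeff_mul_nonneg {A V : R⟦X⟧} (hA : ∀ n, 0 ≤ coeff n A) (hV : ∀ n, 0 ≤ coeff n V)
    (n : ℕ) : 0 ≤ coeff n (A * V) := by
  rw [coeff_mul]
  exact sum_nonneg fun p _ => mul_nonneg (hA _) (hV _)

lemma coeff_mul_le_mul_sum_range {A V : R⟦X⟧} {b : R} (hA : ∀ n, 0 ≤ coeff n A)
    (hV : ∀ n, coeff n V ≤ b) (n : ℕ) :
    coeff n (A * V) ≤ b * ∑ i ∈ range (n + 1), coeff i A := by
  rw [coeff_mul, Nat.sum_antidiagonal_eq_sum_range_succ_mk, mul_sum]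
  exact sum_le_sum fun i _ => by
    rw [mul_comm b]
    exact mul_le_mul_of_nonneg_left (hV _) (hA _)

lemma coeff_nonneg_of_one_sub_mul_eq {A V B : R⟦X⟧} (h : (1 - A) * V = B)
    (hA : ∀ n, 0 ≤ coeff n A) (hA0 : coeff 0 A < 1) (hB : ∀ n, 0 ≤ coeff n B) (n : ℕ) :
    0 ≤ coeff n V := by
  induction n using Nat.strong_induction_on with
  | _ n ih =>
    have hmem : (0, n) ∈ antidiagonal n := by simp
    have hrest : 0 ≤ ∑ p ∈ (antidiagonal n).erase (0, n), coeff p.1 A * coeff p.2 V :=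
      sum_nonneg fun p hp => by
        obtain ⟨hne, hp⟩ := mem_erase.mp hp
        rw [HasAntidiagonal.mem_antidiagonal] at hp
        have : p.1 ≠ 0 := fun h0 => hne (Prod.ext h0 (by omega))
        exact mul_nonneg (hA _) (ih _ (by omega))
    have hn := congrArg (coeff n) h
    rw [sub_mul, one_mul, map_sub, coeff_mul, ← add_sum_erase _ _ hmem] at hn
    nlinarith [hB n]

end Ordered

section Tails

variable {f r ρ π Q : ℕ → ℝ} {μ : ℝ}

lemma sum_range_add_eq_one (hF : (1 - X) * mk r = 1 - mk f) (n : ℕ) :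
    ∑ i ∈ range (n + 1), f i + r n = 1 :=
  sum_range_add_eq_of_one_sub_X_mul_mk_eq (by rw [map_one, hF]) n

lemma increment_mul_one_sub (hF : (1 - X) * mk r = 1 - mk f)
    (hQ : X * mk Q = mk f * (mk Q - C (Q 0))) :
    (1 - mk r) * ((1 - X) * mk Q) = C (Q 0) * mk f := by
  linear_combination (-mk Q) * hF - hQ

lemma increment_nonneg (hF : (1 - X) * mk r = 1 - mk f)
    (hQ : X * mk Q = mk f * (mk Q - C (Q 0)))
    (hf : ∀ n, 0 ≤ f n) (hf0 : 0 < f 0) (hr : ∀ n, 0 ≤ r n) (hQ0 : 0 ≤ Q 0) (n : ℕ) :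
    0 ≤ coeff n ((1 - X) * mk Q) := by
  have hr0 : r 0 < 1 := by linarith [sum_range_add_eq_one hF 0, sum_range_one f]
  exact coeff_nonneg_of_one_sub_mul_eq (increment_mul_one_sub hF hQ) (by simpa using hr)
    (by simpa using hr0) (fun n => by simpa using mul_nonneg hQ0 (hf n)) n

lemma mul_increment_le (hF : (1 - X) * mk r = 1 - mk f) (hR : (1 - X) * mk ρ = 1 - mk r)
    (hQ : X * mk Q = mk f * (mk Q - C (Q 0)))
    (hf : ∀ n, 0 ≤ f n) (hf0 : 0 < f 0) (hr : ∀ n, 0 ≤ r n) (hρ : ∀ n, 0 ≤ ρ n) (hQ0 : 0 ≤ Q 0)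
    (n : ℕ) : f 0 * coeff n ((1 - X) * mk Q) ≤ Q 0 := by
  set V := (1 - X) * mk Q
  have hVρ : (1 - X) * (V * mk ρ) = C (Q 0) * mk f := by
    linear_combination V * hR + increment_mul_one_sub hF hQ
  have hρ0 : ρ 0 = f 0 := by
    linarith [sum_range_add_eq_one hF 0, sum_range_add_eq_one hR 0, sum_range_one f,
      sum_range_one r]
  calc f 0 * coeff n V = coeff n V * coeff 0 (mk ρ) := by rw [coeff_mk, hρ0, mul_comm]
    _ ≤ coeff n (V * mk ρ) := by
      rw [coeff_mul n V]
      refine single_le_sum (f := fun p : ℕ × ℕ => coeff p.1 V * coeff p.2 (mk ρ))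
        (fun p _ => mul_nonneg (increment_nonneg hF hQ hf hf0 hr hQ0 _) (by simpa using hρ _))
        (a := (n, 0)) (by rw [HasAntidiagonal.mem_antidiagonal, add_zero])
    _ = Q 0 * ∑ i ∈ range (n + 1), f i := by
      rw [coeff_eq_sum_range_of_one_sub_X_mul_eq hVρ, mul_sum]
      simp
    _ ≤ Q 0 := by nlinarith [sum_range_add_eq_one hF n, hr n]

lemma C_mul_mk_eq_add_add_mul (hF : (1 - X) * mk r = 1 - mk f)
    (hR : (1 - X) * mk ρ = 1 - mk r) (hP : (1 - X) * mk π = C μ - mk ρ)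
    (hQ : X * mk Q = mk f * (mk Q - C (Q 0))) :
    C μ * mk Q = C (Q 0) * mk (fun n => (n : ℝ)) + C (Q 0) * mk ρ + mk π * ((1 - X) * mk Q) :=
  mul_left_cancel₀ (pow_ne_zero 2 (one_sub_X_ne_zero (R := ℝ))) <| by
    linear_combination (-C (Q 0)) * one_sub_X_sq_mul_mk_natCast (R := ℝ) + (C (Q 0) - mk Q) * hF
      + (mk Q - C (Q 0)) * (1 - X) * hR - (1 - X) ^ 2 * mk Q * hP - hQ

theorem exists_abs_sub_le_of_tails {s : ℝ}
    (hF : (1 - X) * mk r = 1 - mk f) (hR : (1 - X) * mk ρ = 1 - mk r)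
    (hP : (1 - X) * mk π = C μ - mk ρ) (hQ : X * mk Q = mk f * (mk Q - C (Q 0)))
    (hf : ∀ n, 0 ≤ f n) (hf0 : 0 < f 0) (hr : ∀ n, 0 ≤ r n) (hρ : ∀ n, 0 ≤ ρ n)
    (hπ : ∀ n, 0 ≤ π n) (hs : ∀ n, ∑ i ∈ range (n + 1), π i ≤ s) (hQ0 : 0 < Q 0) :
    ∃ B > 0, ∀ n, |Q n - Q 0 / μ * n| ≤ B := by
  have hρ0 := sum_range_add_eq_one hR 0
  have hπ0 := sum_range_add_eq_of_one_sub_X_mul_mk_eq hP 0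
  simp only [zero_add, sum_range_one] at hρ0 hπ0
  have hμ : 0 < μ := by linarith [sum_range_add_eq_one hF 0, sum_range_one f, hπ 0]
  have hs0 : 0 ≤ s := (hπ 0).trans (by simpa using hs 0)
  refine ⟨(Q 0 + Q 0 / f 0 * s) / μ, by positivity, fun n => ?_⟩
  have hn := congrArg (coeff n) (C_mul_mk_eq_add_add_mul hF hR hP hQ)
  simp only [coeff_C_mul, map_add, coeff_mk] at hn
  have hρn : ρ n ≤ 1 := by
    linarith [sum_range_add_eq_one hR n, sum_nonneg fun i (_ : i ∈ range (n + 1)) => hr i]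
  have hπV₀ := coeff_mul_nonneg (A := mk π) (by simpa using hπ)
    (increment_nonneg hF hQ hf hf0 hr hQ0.le) n
  have hπV₁ := coeff_mul_le_mul_sum_range (A := mk π) (b := Q 0 / f 0) (by simpa using hπ)
    (fun k => (le_div_iff₀' hf0).mpr (mul_increment_le hF hR hQ hf hf0 hr hρ hQ0.le k)) n
  simp only [coeff_mk] at hπV₁
  have hπs : Q 0 / f 0 * ∑ i ∈ range (n + 1), π i ≤ Q 0 / f 0 * s :=
    mul_le_mul_of_nonneg_left (hs n) (by positivity)
  have hdev : Q n - Q 0 / μ * n = (Q 0 * ρ n + coeff n (mk π * ((1 - X) * mk Q))) / μ := by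
    field_simp
    linarith
  rw [hdev, abs_of_nonneg (div_nonneg (by nlinarith [hρ n]) hμ.le)]
  gcongr
  · exact mul_le_of_le_one_right hQ0.le hρn
  · exact hπV₁.trans hπs

end Tails

/-- Tail sums are taken in `ℝ≥0∞`, where they always exist and can be rearranged freely. -/
noncomputable def tailSum (g : ℕ → ℝ≥0∞) (k : ℕ) : ℝ≥0∞ := ∑' j, if k < j then g j else 0

section TailSum

variable (g : ℕ → ℝ≥0∞)

lemma tailSum_le_tsum (k : ℕ) : tailSum g k ≤ ∑' j, g j :=
  ENNReal.tsum_le_tsum fun j => by split_ifs <;> simp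

lemma add_tailSum_zero : g 0 + tailSum g 0 = ∑' j, g j := by
  rw [ENNReal.tsum_eq_add_tsum_ite 0, tailSum]
  congr 1
  exact tsum_congr fun j => by rcases j with _ | j <;> simp

lemma tailSum_eq_add_tailSum_succ (k : ℕ) : tailSum g k = g (k + 1) + tailSum g (k + 1) := by
  rw [tailSum, ENNReal.tsum_eq_add_tsum_ite (k + 1), if_pos k.lt_succ_self, tailSum]
  congr 1
  refine tsum_congr fun j => ?_
  by_cases h : j = k + 1
  · simp [h]
  · simp only [h, if_false]
    congr 1
    exact propext ⟨fun hj => by omega, fun hj => by omega⟩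

lemma tsum_mul_tailSum (w : ℕ → ℝ≥0∞) :
    ∑' k, w k * tailSum g k = ∑' j, (∑ k ∈ range j, w k) * g j := by
  calc ∑' k, w k * tailSum g k
      = ∑' k, ∑' j, if k < j then w k * g j else 0 := by
        refine tsum_congr fun k => ?_
        rw [tailSum, ← ENNReal.tsum_mul_left]
        exact tsum_congr fun j => by split_ifs <;> simp
    _ = ∑' j, ∑' k, if k < j then w k * g j else 0 := ENNReal.tsum_comm
    _ = ∑' j, (∑ k ∈ range j, w k) * g j := by
        refine tsum_congr fun j => ?_
        rw [tsum_eq_sum (s := range j) fun k hk => if_neg (by simpa using hk), sum_mul]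
        exact sum_congr rfl fun k hk => if_pos (by simpa using hk)

lemma sum_range_choose_eq_choose_succ (j k : ℕ) :
    ∑ a ∈ range j, a.choose k = j.choose (k + 1) := by
  induction j with
  | zero => simp
  | succ j ih => rw [sum_range_succ, ih, Nat.choose_succ_succ', add_comm]

lemma tsum_choose_mul_iterate_tailSum (n k : ℕ) :
    ∑' j, (j.choose k : ℝ≥0∞) * (tailSum^[n] g) j = ∑' j, (j.choose (k + n) : ℝ≥0∞) * g j := by
  induction n generalizing k with
  | zero => rfl
  | succ n ih =>
    rw [Function.iterate_succ_apply', tsum_mul_tailSum, ← add_assoc, add_right_comm, ← ih]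
    exact tsum_congr fun j => by rw [← Nat.cast_sum, sum_range_choose_eq_choose_succ]

lemma tsum_iterate_tailSum (n : ℕ) :
    ∑' j, (tailSum^[n] g) j = ∑' j, (j.choose n : ℝ≥0∞) * g j := by
  simpa using tsum_choose_mul_iterate_tailSum g n 0

lemma tsum_iterate_tailSum_two_ne_top (h₁ : ∑' j, tailSum g j ≠ ⊤)
    (h₃ : ∑' j, (tailSum^[3] g) j ≠ ⊤) : ∑' j, (tailSum^[2] g) j ≠ ⊤ := by
  rw [← add_tailSum_zero]
  exact ENNReal.add_ne_top.2
    ⟨ne_top_of_le_ne_top h₁ (tailSum_le_tsum _ 0), ne_top_of_le_ne_top h₃ (ENNReal.le_tsum 0)⟩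

lemma sum_toReal_le_toReal_tsum (hg : ∑' j, g j ≠ ⊤) (s : Finset ℕ) :
    ∑ i ∈ s, (g i).toReal ≤ (∑' j, g j).toReal := by
  rw [← ENNReal.toReal_sum fun i _ => ne_top_of_le_ne_top hg (ENNReal.le_tsum i)]
  exact ENNReal.toReal_mono hg (ENNReal.sum_le_tsum s)

lemma one_sub_X_mul_mk_toReal_tailSum (hg : ∑' j, g j ≠ ⊤) :
    (1 - X) * mk (fun k => (tailSum g k).toReal)
      = C (∑' j, g j).toReal - mk (fun k => (g k).toReal) := by
  have hfin : ∀ k, g k ≠ ⊤ ∧ tailSum g k ≠ ⊤ := fun k =>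
    ⟨ne_top_of_le_ne_top hg (ENNReal.le_tsum k), ne_top_of_le_ne_top hg (tailSum_le_tsum g k)⟩
  ext (_ | n)
  · rw [coeff_one_sub_X_mul_zero, coeff_mk, ← add_tailSum_zero,
      ENNReal.toReal_add (hfin 0).1 (hfin 0).2]
    simp
  · rw [coeff_one_sub_X_mul_succ, coeff_mk, coeff_mk, tailSum_eq_add_tailSum_succ g n,
      ENNReal.toReal_add (hfin _).1 (hfin _).2]
    simp

theorem exists_abs_sub_le_of_tailSum {Q : ℕ → ℝ} (hg : ∑' j, g j = 1)
    (hg₁ : ∑' j, tailSum g j = 1) (hg₃ : ∑' j, (tailSum^[3] g) j ≠ ⊤) (hg0 : 0 < (g 0).toReal)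
    (hQ : X * mk Q = mk (fun i => (g i).toReal) * (mk Q - C (Q 0))) (hQ0 : 0 < Q 0) :
    ∃ B > 0, ∀ n, |Q n - Q 0 / (∑' j, (tailSum^[2] g) j).toReal * n| ≤ B :=
  exists_abs_sub_le_of_tails
    (by simpa [hg] using one_sub_X_mul_mk_toReal_tailSum g (by simp [hg]))
    (by simpa [hg₁] using one_sub_X_mul_mk_toReal_tailSum (tailSum g) (by simp [hg₁]))
    (one_sub_X_mul_mk_toReal_tailSum (tailSum^[2] g)
      (tsum_iterate_tailSum_two_ne_top g (by simp [hg₁]) hg₃))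
    hQ (fun _ => ENNReal.toReal_nonneg) hg0 (fun _ => ENNReal.toReal_nonneg)
    (fun _ => ENNReal.toReal_nonneg) (fun _ => ENNReal.toReal_nonneg)
    (fun _ => sum_toReal_le_toReal_tsum _ hg₃ _) hQ0

end TailSum

lemma tsum_ofReal_descFactorial_mul (f : ℕ → ℝ) (k : ℕ) :
    ∑' j, ENNReal.ofReal ((j.descFactorial k : ℝ) * f j)
      = k ! * ∑' j, (tailSum^[k] (fun i => ENNReal.ofReal (f i))) j := by
  rw [tsum_iterate_tailSum, ← ENNReal.tsum_mul_left]
  refine tsum_congr fun j => ?_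
  rw [ENNReal.ofReal_mul (by positivity), ENNReal.ofReal_natCast,
    Nat.descFactorial_eq_factorial_mul_choose, Nat.cast_mul, mul_assoc]

end Postnikov

open Postnikov

/-- Tauberian theorem of Postnikov: if `γ₁ = Σ_{j≥1} j f_j = 1` and
`γ₃ = Σ_{j≥3} j(j-1)(j-2) f_j < ∞`, then `Q_n = (2Q_0/γ₂) n + O(log n)` as `n → ∞`. -/
theorem postnikov_remainder
    (f Q : ℕ → ℝ)
    (hf0 : 0 < f 0) (hf : ∀ i, 0 ≤ f i)
    (hfsum : ∑' i : ℕ, f i = 1)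
    (hQ0 : 0 < Q 0)
    (hrec : ∀ n, Q n = ∑ i ∈ Finset.range (n + 1), f i * Q (n - i + 1))
    (hγ1 : ∑' j : ℕ, ENNReal.ofReal ((j : ℝ) * f j) = 1)
    (hγ3 : ∑' j : ℕ, ENNReal.ofReal ((j.descFactorial 3 : ℝ) * f j) < ⊤) :
    ∃ C > (0 : ℝ), ∃ N : ℕ, ∀ n ≥ N,
      |Q n - 2 * Q 0 / (∑' j : ℕ, ENNReal.ofReal ((j.descFactorial 2 : ℝ) * f j)).toReal * n|
        ≤ C * Real.log n := by
  set g : ℕ → ℝ≥0∞ := fun i => ENNReal.ofReal (f i)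
  have hfg : (fun i => (g i).toReal) = f := funext fun i => ENNReal.toReal_ofReal (hf i)
  have hg : ∑' i, g i = 1 := by
    have hSf : Summable f := by
      by_contra h
      simp [tsum_eq_zero_of_not_summable h] at hfsum
    rw [← ENNReal.ofReal_tsum_of_nonneg hf hSf, hfsum, ENNReal.ofReal_one]
  have hg₁ : ∑' i, tailSum g i = 1 := by
    have h := tsum_ofReal_descFactorial_mul f 1
    simp only [Nat.descFactorial_one, Nat.factorial_one, Nat.cast_one, one_mul,
      Function.iterate_one] at h
    exact h.symm.trans hγ1
  have hg₃ : ∑' i, (tailSum^[3] g) i ≠ ⊤ := by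
    rw [tsum_ofReal_descFactorial_mul] at hγ3
    exact (ENNReal.lt_top_of_mul_ne_top_right hγ3.ne (by positivity)).ne
  obtain ⟨B, hB, hbound⟩ := exists_abs_sub_le_of_tailSum g hg hg₁ hg₃
    (by rwa [congrFun hfg 0]) (hfg ▸ X_mul_mk_eq_mk_mul_sub hrec) hQ0
  have hγ2 : (∑' j : ℕ, ENNReal.ofReal ((j.descFactorial 2 : ℝ) * f j)).toReal
      = 2 * (∑' j, (tailSum^[2] g) j).toReal := by
    rw [tsum_ofReal_descFactorial_mul, ENNReal.toReal_mul, Nat.factorial_two, Nat.cast_ofNat,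
      ENNReal.toReal_ofNat]
  refine ⟨B, hB, 3, fun n hn => ?_⟩
  have hlog : 1 ≤ Real.log n := by
    rw [Real.le_log_iff_exp_le (by positivity)]
    have hn3 : (3 : ℝ) ≤ n := by exact_mod_cast hn
    linarith [Real.exp_one_lt_d9]
  rw [hγ2, mul_div_mul_left _ _ two_ne_zero]
  exact (hbound n).trans (le_mul_of_one_le_right hB.le hlog)
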